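/- arXiv:1810.09882 — 3 statements merged into one kernel-verified Lean document; each statement's English description precedes it below -/
import Mathlib

section
/- A random variable ξ on a probability space (Ω,F,Q) is sigma-integrable with respect to a sub-sigma-field G ⊆ F (i.e., there exists a sequence (Ω_k) ⊆ G with Ω_k ↑ Ω and ξ1_{Ω_k} ∈ L¹(Q) for all k) if and only if the generalized conditional expectation E^Q[|ξ| | G] is almost surely finite. -/
open MeasureTheory
open scoped ENNReal

/-- A random variable `ξ` on a probability space `(Ω,F,Q)` is sigma-integrable
with respect to a sub-sigma-field `G ⊆ F` (i.e. there are sets `Ω_k ∈ G`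
increasing to `Ω` with `ξ 1_{Ω_k} ∈ L¹(Q)`) if and only if the generalized
conditional expectation `E^Q[|ξ| | G] := lim_k E^Q[|ξ| ∧ k | G]` (a monotone
limit, here written as a supremum in `[0,∞]`) is almost surely finite. -/
theorem sigma_integrable_iff_generalized_condExp_finite
    {Ω : Type*} (G : MeasurableSpace Ω) {m0 : MeasurableSpace Ω}
    (Q : Measure Ω) [IsProbabilityMeasure Q]
    (hG : G ≤ m0)
    (ξ : Ω → ℝ) (hξ : Measurable ξ) :
    (∃ Ωk : ℕ → Set Ω, (∀ k, MeasurableSet[G] (Ωk k)) ∧ Monotone Ωk ∧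
        (⋃ k, Ωk k) = Set.univ ∧ ∀ k, Integrable ((Ωk k).indicator ξ) Q) ↔
      (∀ᵐ ω ∂Q,
        (⨆ k : ℕ, ENNReal.ofReal ((Q[fun ω' => min |ξ ω'| (k : ℝ)|G]) ω)) < ⊤) := by
  letI : MeasurableSpace Ω := m0
  have hξ0 : Measurable[m0] ξ := hξ
  set f : ℕ → Ω → ℝ := fun k ω => min |ξ ω| (k : ℝ) with hf
  have hf_meas : ∀ k, Measurable[m0] (f k) := fun k => (hξ0.abs.min measurable_const)
  have hf_nonneg : ∀ k ω, 0 ≤ f k ω := fun k ω => le_min (abs_nonneg _) (Nat.cast_nonneg _)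
  have hf_le : ∀ k ω, f k ω ≤ (k : ℝ) := fun k ω => min_le_right _ _
  have hf_int : ∀ k, Integrable (f k) Q := by
    intro k
    refine Integrable.mono' (integrable_const (k : ℝ))
      ((hf_meas k).aestronglyMeasurable) ?_
    filter_upwards with ω
    rw [Real.norm_eq_abs, abs_of_nonneg (hf_nonneg k ω)]
    exact hf_le k ω
  constructor
  · rintro ⟨Ωk, hΩk_meas, hΩk_mono, hΩk_univ, hΩk_int⟩
    have key : ∀ j k : ℕ, ∀ᵐ ω ∂Q, ω ∈ Ωk j →
        (Q[f k|G]) ω ≤ (Q[fun ω => abs ((Ωk j).indicator ξ ω)|G]) ω := by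
      intro j k
      have h1 : Q[(Ωk j).indicator (f k)|G] =ᵐ[Q] (Ωk j).indicator (Q[f k|G]) :=
        condExp_indicator (hf_int k) (hΩk_meas j)
      have hjm0 : MeasurableSet[m0] (Ωk j) := hG _ (hΩk_meas j)
      have hind : Integrable ((Ωk j).indicator (f k)) Q :=
        (hf_int k).indicator hjm0
      have h2 : ∀ᵐ ω ∂Q, (Q[(Ωk j).indicator (f k)|G]) ω
          ≤ (Q[fun ω => abs ((Ωk j).indicator ξ ω)|G]) ω := by
        refine condExp_mono hind (hΩk_int j).abs ?_
        filter_upwards with ω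
        by_cases hω : ω ∈ Ωk j
        · simp only [Set.indicator_of_mem hω]
          exact min_le_left _ _
        · simp [Set.indicator_of_notMem hω]
      filter_upwards [h1, h2] with ω h1 h2 hω
      calc (Q[f k|G]) ω = (Ωk j).indicator (Q[f k|G]) ω := (Set.indicator_of_mem hω _).symm
        _ = (Q[(Ωk j).indicator (f k)|G]) ω := h1.symm
        _ ≤ _ := h2
    have key' : ∀ᵐ ω ∂Q, ∀ j k, ω ∈ Ωk j →
        (Q[f k|G]) ω ≤ (Q[fun ω => abs ((Ωk j).indicator ξ ω)|G]) ω :=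
      ae_all_iff.2 fun j => ae_all_iff.2 fun k => key j k
    filter_upwards [key'] with ω hω
    obtain ⟨j, hj⟩ : ∃ j, ω ∈ Ωk j := by
      have := Set.mem_univ ω
      rw [← hΩk_univ] at this
      exact Set.mem_iUnion.1 this
    refine lt_of_le_of_lt (iSup_le fun k => ?_)
      (ENNReal.ofReal_lt_top (r := (Q[fun ω => abs ((Ωk j).indicator ξ ω)|G]) ω))
    exact ENNReal.ofReal_le_ofReal (hω j k hj)
  · intro hfin
    set g : Ω → ℝ≥0∞ := fun ω => ⨆ k : ℕ, ENNReal.ofReal ((Q[f k|G]) ω) with hg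
    have hgfin : ∀ᵐ ω ∂Q, g ω < ⊤ := hfin
    have hg_meas : Measurable[G] g := by
      refine Measurable.iSup fun k => ?_
      exact ENNReal.measurable_ofReal.comp (stronglyMeasurable_condExp (f := f k)).measurable
    set A : ℕ → Set Ω := fun k => {ω | g ω ≤ (k : ℝ≥0∞)} ∪ {ω | g ω = ⊤} with hA
    have hA_meas : ∀ k, MeasurableSet[G] (A k) := fun k =>
      ((hg_meas measurableSet_Iic).union (hg_meas (measurableSet_singleton ⊤)))
    have hA_mono : Monotone A := by
      intro a b hab
      exact Set.union_subset_union_left _ fun ω hω =>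
        le_trans hω (show ((a:ℝ≥0∞)) ≤ ((b:ℝ≥0∞)) by exact_mod_cast hab)
    have hA_univ : ⋃ k, A k = Set.univ := by
      ext ω
      simp only [Set.mem_iUnion, Set.mem_union, Set.mem_setOf_eq, Set.mem_univ, iff_true]
      rcases eq_or_ne (g ω) ⊤ with h | h
      · exact ⟨0, Or.inr h⟩
      · obtain ⟨k, hk⟩ := exists_nat_gt (g ω).toReal
        refine ⟨k, Or.inl ?_⟩
        calc g ω = ENNReal.ofReal (g ω).toReal := (ENNReal.ofReal_toReal h).symm
          _ ≤ ENNReal.ofReal (k : ℝ) := ENNReal.ofReal_le_ofReal hk.le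
          _ = (k : ℝ≥0∞) := ENNReal.ofReal_natCast k
    have hNull : Q {ω | g ω = ⊤} = 0 := by
      have := ae_iff.1 hgfin
      convert this using 2
      ext ω
      simp [lt_top_iff_ne_top]
    refine ⟨A, hA_meas, hA_mono, hA_univ, fun k => ?_⟩
    set B : Set Ω := {ω | g ω ≤ (k : ℝ≥0∞)} with hB
    have hB_G : MeasurableSet[G] B := hg_meas measurableSet_Iic
    have hB_m0 : MeasurableSet[m0] B := hG _ hB_G
    have hae : (A k).indicator ξ =ᵐ[Q] B.indicator ξ := by
      have hn : ∀ᵐ ω ∂Q, ω ∉ {ω | g ω = ⊤} := by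
        rw [ae_iff]
        simpa using hNull
      filter_upwards [hn] with ω hω
      by_cases hωB : ω ∈ B
      · rw [Set.indicator_of_mem hωB, Set.indicator_of_mem (Set.mem_union_left _ hωB)]
      · rw [Set.indicator_of_notMem hωB, Set.indicator_of_notMem (by
          simp only [hA, Set.mem_union]
          push_neg
          exact ⟨hωB, hω⟩)]
    rw [integrable_congr hae]
    have hbound : ∀ j : ℕ, ∫⁻ ω in B, ENNReal.ofReal (f j ω) ∂Q ≤ (k : ℝ≥0∞) := by
      intro j
      have hcond_le : ∀ᵐ ω ∂Q.restrict B, (Q[f j|G]) ω ≤ (k : ℝ) := by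
        rw [ae_restrict_iff' hB_m0]
        filter_upwards with ω hω
        have h1 : ENNReal.ofReal ((Q[f j|G]) ω) ≤ (k : ℝ≥0∞) :=
          le_trans (le_iSup (fun i => ENNReal.ofReal ((Q[f i|G]) ω)) j) hω
        rcases le_or_gt ((Q[f j|G]) ω) 0 with h | h
        · exact h.trans (Nat.cast_nonneg _)
        · have h2 := ENNReal.toReal_mono (by simp) h1
          rwa [ENNReal.toReal_ofReal h.le, ENNReal.toReal_natCast] at h2
      have hint : ∫ ω in B, f j ω ∂Q = ∫ ω in B, (Q[f j|G]) ω ∂Q :=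
        (setIntegral_condExp hG (hf_int j) hB_G).symm
      have hle : ∫ ω in B, f j ω ∂Q ≤ (k : ℝ) := by
        rw [hint]
        calc ∫ ω in B, (Q[f j|G]) ω ∂Q ≤ ∫ _ω in B, (k : ℝ) ∂Q :=
              integral_mono_ae integrable_condExp.integrableOn
                (integrable_const _).integrableOn hcond_le
          _ = (Q B).toReal * (k : ℝ) := by rw [setIntegral_const]; rw [smul_eq_mul]; rfl
          _ ≤ 1 * (k : ℝ) := by
              refine mul_le_mul_of_nonneg_right ?_ (Nat.cast_nonneg _)
              exact ENNReal.toReal_le_of_le_ofReal one_pos.le (by simpa using prob_le_one)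
          _ = (k : ℝ) := one_mul _
      calc ∫⁻ ω in B, ENNReal.ofReal (f j ω) ∂Q
          = ENNReal.ofReal (∫ ω in B, f j ω ∂Q) := by
            rw [ofReal_integral_eq_lintegral_ofReal (hf_int j).integrableOn
              (Filter.Eventually.of_forall fun ω => hf_nonneg j ω)]
        _ ≤ ENNReal.ofReal (k : ℝ) := ENNReal.ofReal_le_ofReal hle
        _ = (k : ℝ≥0∞) := ENNReal.ofReal_natCast k
    have hsup : ∀ ω, ⨆ j : ℕ, ENNReal.ofReal (f j ω) = ENNReal.ofReal |ξ ω| := by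
      intro ω
      refine le_antisymm (iSup_le fun j => ENNReal.ofReal_le_ofReal (min_le_left _ _)) ?_
      obtain ⟨j, hj⟩ := exists_nat_ge |ξ ω|
      refine le_trans ?_ (le_iSup (fun i => ENNReal.ofReal (f i ω)) j)
      exact le_of_eq (congrArg ENNReal.ofReal (min_eq_left hj).symm)
    have hlint : ∫⁻ ω in B, ENNReal.ofReal |ξ ω| ∂Q ≤ (k : ℝ≥0∞) := by
      calc ∫⁻ ω in B, ENNReal.ofReal |ξ ω| ∂Q
          = ∫⁻ ω in B, ⨆ j : ℕ, ENNReal.ofReal (f j ω) ∂Q :=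
            lintegral_congr fun ω => (hsup ω).symm
        _ = ⨆ j : ℕ, ∫⁻ ω in B, ENNReal.ofReal (f j ω) ∂Q := by
            refine lintegral_iSup (fun j => ENNReal.measurable_ofReal.comp (hf_meas j)) ?_
            intro a b hab ω
            exact ENNReal.ofReal_le_ofReal (min_le_min le_rfl (by exact_mod_cast hab))
        _ ≤ (k : ℝ≥0∞) := iSup_le hbound
    refine ⟨(hξ0.indicator hB_m0).aestronglyMeasurable, ?_⟩
    rw [hasFiniteIntegral_iff_norm]
    calc ∫⁻ ω, ENNReal.ofReal ‖B.indicator ξ ω‖ ∂Q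
        = ∫⁻ ω in B, ENNReal.ofReal |ξ ω| ∂Q := by
          rw [← lintegral_indicator hB_m0]
          refine lintegral_congr fun ω => ?_
          by_cases hω : ω ∈ B
          · simp [Set.indicator_of_mem hω, Real.norm_eq_abs]
          · simp [Set.indicator_of_notMem hω]
      _ ≤ (k : ℝ≥0∞) := hlint
      _ < ⊤ := by simp
end

section
/- Let X be the four-dimensional process X_t = (t, ∫_0^t ξ_s ds, ξ_t) where ξ solves the Vasiček SDE dξ_t = κ(θ - ξ_t)dt + σ dW_t. If the forward rate is defined by f(t,T) = f(0,T) + ∫_0^t φ(s,T)·dX_s with φ(s,T) = (φ_1(s,T), φ_2(s,T), φ_3(s,T)) = ((σ²/κ)(e^{-κ(T-s)} - e^{-2κ(T-s)}) - κθ e^{-κ(T-s)}, κ e^{-κ(T-s)}, e^{-κ(T-s)}), then the short rate satisfies f(t,t) = ξ_t almost surely, provided f(0,T) is chosen as the Vasiček initial forward curve f(0,T) = θ + (ξ_0 - θ)e^{-κT} - (σ²/(2κ²))(1-e^{-κT})². -/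
open Real intervalIntegral

/-!
At `T = t` the `φ₂`-integral and the drift part of the `φ₃`-integral cancel the `κθ`-part of
`φ₁`, and the remaining deterministic `σ²`-integral equals the convexity term of `f(0,t)`.
What is left is `θ + (ξ₀ - θ)e^{-κt} + σ(W_t - κ∫₀ᵗ e^{-κ(t-s)} W_s ds)`, the
variation-of-constants solution of the pathwise Vasiček equation: writing
`ξ = G + σW` with `G` differentiable, `e^{κy}(G_y - θ) + σκ∫₀ʸ e^{κs} W_s ds` has
derivative zero.
-/

theorem integral_exp_neg_mul_sub {c : ℝ} (hc : c ≠ 0) (t : ℝ) :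
    ∫ s in (0:ℝ)..t, exp (-c * (t - s)) = (1 - exp (-c * t)) / c := by
  have hlin : ∀ s, -c * (t - s) = c * s - c * t := fun s => by ring
  simp only [hlin]
  rw [integral_comp_mul_sub (fun u => exp u) hc, integral_exp, smul_eq_mul, sub_self, mul_zero,
    zero_sub, exp_zero, neg_mul]
  field_simp

theorem integral_vasicek_convexity_adjustment {κ : ℝ} (hκ : κ ≠ 0) (σ t : ℝ) :
    ∫ s in (0:ℝ)..t, σ ^ 2 / κ * (exp (-κ * (t - s)) - exp (-2 * κ * (t - s)))
      = σ ^ 2 / (2 * κ ^ 2) * (1 - exp (-κ * t)) ^ 2 := by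
  have hexp : ∀ c, Continuous fun s => exp (-c * (t - s)) := fun c => by fun_prop
  have hsq : exp (-(2 * κ) * t) = exp (-κ * t) ^ 2 := by rw [← exp_nat_mul]; ring_nf
  rw [show -2 * κ = -(2 * κ) by ring, integral_const_mul,
    integral_sub ((hexp κ).intervalIntegrable _ _) ((hexp (2 * κ)).intervalIntegrable _ _),
    integral_exp_neg_mul_sub hκ, integral_exp_neg_mul_sub (mul_ne_zero two_ne_zero hκ), hsq]
  field_simp
  ring

theorem vasicek_pathwise_solution {κ θ σ x₀ : ℝ} {x w : ℝ → ℝ} (hx : Continuous x)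
    (hw : Continuous w)
    (hSDE : ∀ t, 0 ≤ t → x t = x₀ + (∫ s in (0:ℝ)..t, κ * (θ - x s)) + σ * w t)
    {t : ℝ} (ht : 0 ≤ t) :
    x t = θ + (x₀ - θ) * exp (-κ * t)
      + σ * (w t - ∫ s in (0:ℝ)..t, κ * exp (-κ * (t - s)) * w s) := by
  set G : ℝ → ℝ := fun y => x₀ + ∫ s in (0:ℝ)..y, κ * (θ - x s)
  set J : ℝ → ℝ := fun y => ∫ s in (0:ℝ)..y, exp (κ * s) * w s
  have hG : ∀ y, HasDerivAt G (κ * (θ - x y)) y := fun y =>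
    ((Continuous.integral_hasStrictDerivAt (by fun_prop) 0 y).hasDerivAt).const_add x₀
  have hJ : ∀ y, HasDerivAt J (exp (κ * y) * w y) y := fun y =>
    (Continuous.integral_hasStrictDerivAt (by fun_prop) 0 y).hasDerivAt
  set H : ℝ → ℝ := fun y => exp (κ * y) * (G y - θ) + σ * κ * J y
  have hH : ∀ y, 0 ≤ y → HasDerivAt H 0 y := by
    intro y hy
    have hE : HasDerivAt (fun s => exp (κ * s)) (exp (κ * y) * κ) y :=
      ((hasDerivAt_id y).const_mul κ).exp.congr_deriv (by simp)
    refine ((hE.mul ((hG y).sub_const θ)).add ((hJ y).const_mul (σ * κ))).congr_deriv ?_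
    rw [hSDE y hy]
    ring
  have hHconst : H t = H 0 := constant_of_has_deriv_right_zero
    (fun y hy => (hH y hy.1).continuousAt.continuousWithinAt)
    (fun y hy => (hH y hy.1).hasDerivWithinAt) t ⟨ht, le_rfl⟩
  have hH0 : H 0 = x₀ - θ := by simp [H, G, J]
  have hkernel : ∫ s in (0:ℝ)..t, κ * exp (-κ * (t - s)) * w s = κ * exp (-κ * t) * J t := by
    rw [← integral_const_mul]
    refine integral_congr fun s _ => ?_
    rw [show -κ * (t - s) = -κ * t + κ * s by ring, exp_add]
    ring
  have hinv : exp (-κ * t) * exp (κ * t) = 1 := by rw [← exp_add]; simp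
  rw [hSDE t ht, hkernel]
  linear_combination exp (-κ * t) * (hHconst.trans hH0) - (G t - θ) * hinv

theorem integral_vasicek_forward_drift {κ θ σ T t : ℝ} {ξ : ℝ → ℝ} (hξ : Continuous ξ) :
    (∫ s in (0:ℝ)..t, ((σ ^ 2 / κ) * (exp (-κ * (T - s)) - exp (-2 * κ * (T - s)))
        - κ * θ * exp (-κ * (T - s))))
      + (∫ s in (0:ℝ)..t, κ * exp (-κ * (T - s)) * ξ s)
      + (∫ s in (0:ℝ)..t, exp (-κ * (T - s)) * (κ * (θ - ξ s)))
      = ∫ s in (0:ℝ)..t, σ ^ 2 / κ * (exp (-κ * (T - s)) - exp (-2 * κ * (T - s))) := by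
  have hint {g : ℝ → ℝ} (hg : Continuous g) : IntervalIntegrable g MeasureTheory.volume 0 t :=
    hg.intervalIntegrable 0 t
  rw [← integral_add (hint (by fun_prop)) (hint (by fun_prop)),
    ← integral_add (hint (by fun_prop)) (hint (by fun_prop))]
  exact integral_congr fun s _ => by ring

theorem vasicek_short_rate_consistency_general
    (κ θ σ ξ0 : ℝ) (hκ : 0 < κ)
    (W ξ : ℝ → ℝ) (hW_cont : Continuous W)
    (hξ_cont : Continuous ξ)
    -- pathwise Vasiček SDE: ξ_t = ξ₀ + ∫_0^t κ(θ - ξ_s) ds + σ W_t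
    (hSDE : ∀ t : ℝ, 0 ≤ t →
      ξ t = ξ0 + (∫ s in (0:ℝ)..t, κ * (θ - ξ s)) + σ * W t)
    (f : ℝ → ℝ → ℝ)
    (hf : ∀ t T : ℝ, f t T
      = (θ + (ξ0 - θ) * exp (-κ * T) - (σ ^ 2 / (2 * κ ^ 2)) * (1 - exp (-κ * T)) ^ 2)
        -- ∫_0^t φ₁(s,T) ds
        + (∫ s in (0:ℝ)..t,
            ((σ ^ 2 / κ) * (exp (-κ * (T - s)) - exp (-2 * κ * (T - s)))
              - κ * θ * exp (-κ * (T - s))))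
        -- ∫_0^t φ₂(s,T) ξ_s ds
        + (∫ s in (0:ℝ)..t, κ * exp (-κ * (T - s)) * ξ s)
        -- ∫_0^t φ₃(s,T) dξ_s, with the dW-part integrated by parts
        + (∫ s in (0:ℝ)..t, exp (-κ * (T - s)) * (κ * (θ - ξ s)))
        + σ * (exp (-κ * (T - t)) * W t
            - (∫ s in (0:ℝ)..t, κ * exp (-κ * (T - s)) * W s))) :
    ∀ t : ℝ, 0 ≤ t → f t t = ξ t := by
  intro t ht
  have hexp_zero : exp (-κ * (t - t)) = 1 := by simp
  rw [hf t t, hexp_zero]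
  linear_combination integral_vasicek_forward_drift hξ_cont
    + integral_vasicek_convexity_adjustment hκ.ne' σ t
    - vasicek_pathwise_solution hξ_cont hW_cont hSDE ht

/-- Consistency of the Vasiček HJM specification: with driving process
`X_t = (t, ∫_0^t ξ_s ds, ξ_t)`, where `ξ` solves the Vasiček SDE
`dξ_t = κ(θ - ξ_t)dt + σ dW_t` (formulated pathwise for a continuous path `W`
of Brownian motion, the stochastic integral `∫_0^t φ₃(s,T) dξ_s` being defined
via the SDE and integration by parts for the `dW`-part), the forward rate
`f(t,T) = f(0,T) + ∫_0^t φ(s,T)·dX_s` with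
`φ(s,T) = ((σ²/κ)(e^{-κ(T-s)} - e^{-2κ(T-s)}) - κθ e^{-κ(T-s)},
 κ e^{-κ(T-s)}, e^{-κ(T-s)})` and initial curve
`f(0,T) = θ + (ξ₀ - θ)e^{-κT} - (σ²/(2κ²))(1 - e^{-κT})²`
satisfies `f(t,t) = ξ_t`. -/
theorem vasicek_short_rate_consistency
    (κ θ σ ξ0 : ℝ) (hκ : 0 < κ) (hθ : 0 < θ) (hσ : 0 < σ)
    (W ξ : ℝ → ℝ) (hW_cont : Continuous W) (hW0 : W 0 = 0)
    (hξ_cont : Continuous ξ)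
    -- pathwise Vasiček SDE: ξ_t = ξ₀ + ∫_0^t κ(θ - ξ_s) ds + σ W_t
    (hSDE : ∀ t : ℝ, 0 ≤ t →
      ξ t = ξ0 + (∫ s in (0:ℝ)..t, κ * (θ - ξ s)) + σ * W t)
    (f : ℝ → ℝ → ℝ)
    (hf : ∀ t T : ℝ, f t T
      = (θ + (ξ0 - θ) * exp (-κ * T) - (σ ^ 2 / (2 * κ ^ 2)) * (1 - exp (-κ * T)) ^ 2)
        -- ∫_0^t φ₁(s,T) ds
        + (∫ s in (0:ℝ)..t,
            ((σ ^ 2 / κ) * (exp (-κ * (T - s)) - exp (-2 * κ * (T - s)))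
              - κ * θ * exp (-κ * (T - s))))
        -- ∫_0^t φ₂(s,T) ξ_s ds
        + (∫ s in (0:ℝ)..t, κ * exp (-κ * (T - s)) * ξ s)
        -- ∫_0^t φ₃(s,T) dξ_s, with the dW-part integrated by parts
        + (∫ s in (0:ℝ)..t, exp (-κ * (T - s)) * (κ * (θ - ξ s)))
        + σ * (exp (-κ * (T - t)) * W t
            - (∫ s in (0:ℝ)..t, κ * exp (-κ * (T - s)) * W s))) :
    ∀ t : ℝ, 0 ≤ t → f t t = ξ t :=
  vasicek_short_rate_consistency_general κ θ σ ξ0 hκ W ξ hW_cont hξ_cont hSDE f hf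
end

section
/- Let G be a pure-jump finite variation process of the form G_t = Σ_{n∈ℕ} γ_n 1_{T_n ≤ t} with deterministic jump times T_n ↑ ∞ and γ_n an F_{T_n}-measurable integrable random variable for each n. Then G is a martingale with respect to (F_t) if and only if E[γ_n | F_{T_n-}] = 0 almost surely for every n ∈ ℕ. -/
open MeasureTheory
open scoped NNReal

/-!
Since `T n → ∞`, only finitely many jumps occur before any time `t`, so every increment
`G t - G s` is the finite sum of the `γ k` with `s < T k ≤ t`. If each `γ k` has zero
conditional expectation given `ℱ_{T k-}`, the tower property kills every such term given
`ℱ s ≤ ℱ_{T k-}`. Conversely, for `s` between `T (n - 1)` and `T n` the increment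
`G (T n) - G s` is `γ n` alone, so the martingale property gives `E[γ n | ℱ s] = 0` there,
hence by the tower property for all `s < T n`. These σ-algebras form a directed family
generating `ℱ_{T n-}`, and a π-λ argument on set integrals passes the identity to the
supremum.
-/

open Filter Set

section Jumps

variable {ι : Type*} {T : ℕ → ι}

theorem finite_setOf_le_of_tendsto_atTop [Preorder ι] [NoMaxOrder ι]
    (hT : Tendsto T atTop atTop) (t : ι) : {n | T n ≤ t}.Finite := by
  refine (eventually_cofinite.1 ?_).subset fun n (hn : T n ≤ t) => hn.not_gt
  exact Nat.cofinite_eq_atTop ▸ hT.eventually (eventually_gt_atTop t)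

variable [LinearOrder ι]

theorem tsum_ite_le_eq_sum {M : Type*} [AddCommMonoid M] [TopologicalSpace M]
    {x : ℕ → M} {J : Finset ℕ} {t : ι} (hJ : ∀ n, n ∈ J ↔ T n ≤ t) :
    ∑' n, (if T n ≤ t then x n else 0) = ∑ n ∈ J, x n := by
  rw [tsum_eq_sum fun n hn => if_neg (mt (hJ n).2 hn)]
  exact Finset.sum_congr rfl fun n hn => if_pos ((hJ n).1 hn)

theorem exists_le_lt_forall_lt_le (hT : StrictMono T) {s : ι} {n : ℕ} (hsn : s < T n) :
    ∃ s', s ≤ s' ∧ s' < T n ∧ ∀ k < n, T k ≤ s' := by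
  cases n with
  | zero => exact ⟨s, le_rfl, hsn, by simp⟩
  | succ m =>
    exact ⟨max s (T m), le_max_left _ _, max_lt hsn (hT m.lt_succ_self),
      fun k hk => (hT.monotone (Nat.lt_succ_iff.1 hk)).trans (le_max_right _ _)⟩

theorem sdiff_eq_singleton_of_forall_lt_le (hT : StrictMono T) {S : ι → Finset ℕ}
    (hS : ∀ t n, n ∈ S t ↔ T n ≤ t) {s : ι} {n : ℕ} (hsn : s < T n)
    (hs : ∀ k < n, T k ≤ s) : S (T n) \ S s = {n} := by
  ext k
  simp only [Finset.mem_sdiff, hS, Finset.mem_singleton, hT.le_iff_le, not_le]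
  constructor
  · rintro ⟨hkn, hsk⟩
    by_contra hne
    exact (hs k (lt_of_le_of_ne hkn hne)).not_gt hsk
  · rintro rfl
    exact ⟨le_rfl, hsn⟩

end Jumps

namespace MeasureTheory

variable {Ω E ι : Type*} {m0 : MeasurableSpace Ω} {μ : Measure Ω}
  [NormedAddCommGroup E] [NormedSpace ℝ E] [CompleteSpace E]

theorem condExp_ae_eq_zero_of_le [IsFiniteMeasure μ] {m m' : MeasurableSpace Ω} {f : Ω → E}
    (hm : m ≤ m') (hm' : m' ≤ m0) (h : μ[f|m'] =ᵐ[μ] 0) : μ[f|m] =ᵐ[μ] 0 :=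
  calc μ[f|m] =ᵐ[μ] μ[μ[f|m']|m] := (condExp_condExp_of_le hm hm').symm
    _ =ᵐ[μ] μ[0|m] := condExp_congr_ae h
    _ = 0 := condExp_zero

theorem condExp_finsetSum_ae_eq_zero {κ : Type*} {J : Finset κ} {f : κ → Ω → E}
    {m : MeasurableSpace Ω} (hf : ∀ k ∈ J, Integrable (f k) μ)
    (h : ∀ k ∈ J, μ[f k|m] =ᵐ[μ] 0) : μ[∑ k ∈ J, f k|m] =ᵐ[μ] 0 := by
  filter_upwards [condExp_finsetSum hf m, (eventually_all_finset J).2 h] with ω hsum hzero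
  simpa [hsum] using Finset.sum_eq_zero hzero

theorem condExp_iSup_ae_eq_zero [Nonempty ι] [IsFiniteMeasure μ] {m : ι → MeasurableSpace Ω}
    (hm : ∀ i, m i ≤ m0) (hdir : Directed (· ≤ ·) m) {f : Ω → E} (hf : Integrable f μ)
    (h : ∀ i, μ[f|m i] =ᵐ[μ] 0) : μ[f|⨆ i, m i] =ᵐ[μ] 0 := by
  have hle : ⨆ i, m i ≤ m0 := iSup_le hm
  have hbasic : ∀ i A, MeasurableSet[m i] A → ∫ ω in A, f ω ∂μ = 0 := fun i A hA => by
    rw [← setIntegral_condExp (hm i) hf hA, setIntegral_congr_ae (hm i A hA)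
      (by filter_upwards [h i] with ω hω _ using hω)]
    simp
  have huniv : ∫ ω, f ω ∂μ = 0 := by simpa using hbasic (Classical.arbitrary ι) _ .univ
  have hpi : IsPiSystem {A | ∃ i, MeasurableSet[m i] A} := by
    rw [ofPred_exists]
    exact isPiSystem_iUnion_of_directed_le _ (fun i => (m i).isPiSystem_measurableSet) hdir
  have hzero : ∀ A, MeasurableSet[⨆ i, m i] A → ∫ ω in A, f ω ∂μ = 0 := by
    intro A hA
    induction A, hA using MeasurableSpace.induction_on_inter
      (MeasurableSpace.measurableSpace_iSup_eq m) hpi with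
    | empty => simp
    | basic A hA =>
      obtain ⟨i, hA⟩ := hA
      exact hbasic i A hA
    | compl A hA ihA =>
      have := integral_add_compl (hle A hA) hf
      rwa [ihA, zero_add, huniv] at this
    | iUnion A hdisj hA ihA =>
      rw [integral_iUnion (fun i => hle _ (hA i)) hdisj hf.integrableOn]
      simp [ihA]
  refine (ae_eq_condExp_of_forall_setIntegral_eq hle hf (fun _ _ _ => integrableOn_zero)
    (fun A hA _ => ?_) aestronglyMeasurable_zero).symm
  simp [hzero A hA]

theorem Filtration.condExp_biSup_Iio_ae_eq_zero [LinearOrder ι] [IsFiniteMeasure μ]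
    (ℱ : Filtration ι m0) {q : ι} (hq : ∃ s, s < q) {f : Ω → E} (hf : Integrable f μ)
    (h : ∀ s < q, μ[f|ℱ s] =ᵐ[μ] 0) : μ[f|⨆ s ∈ Iio q, ℱ s] =ᵐ[μ] 0 := by
  obtain ⟨s₀, hs₀⟩ := hq
  have : Nonempty (Iio q) := ⟨⟨s₀, hs₀⟩⟩
  rw [← iSup_subtype'']
  exact condExp_iSup_ae_eq_zero (m := fun s : Iio q => ℱ s) (fun s => ℱ.le s)
    (Monotone.directed_le fun s t hst => ℱ.mono hst) hf fun s => h s s.2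

section Increments

variable [Preorder ι] [IsFiniteMeasure μ] {ℱ : Filtration ι m0} {G : ι → Ω → E}

theorem Martingale.condExp_sub_ae_eq_zero (hG : Martingale G ℱ μ) {s t : ι} (hst : s ≤ t) :
    μ[G t - G s|ℱ s] =ᵐ[μ] 0 := by
  filter_upwards [condExp_sub (hG.integrable t) (hG.integrable s) (ℱ s), hG.condExp_ae_eq hst]
    with ω hsub hGt
  rw [hsub, Pi.sub_apply, hGt, condExp_of_stronglyMeasurable (ℱ.le s) (hG.stronglyAdapted s)
    (hG.integrable s), sub_self, Pi.zero_apply]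

theorem martingale_of_condExp_sub_ae_eq_zero (hadp : StronglyAdapted ℱ G)
    (hint : ∀ t, Integrable (G t) μ) (h : ∀ s t, s ≤ t → μ[G t - G s|ℱ s] =ᵐ[μ] 0) :
    Martingale G ℱ μ := by
  refine ⟨hadp, fun s t hst => ?_⟩
  filter_upwards [condExp_sub (hint t) (hint s) (ℱ s), h s t hst] with ω hsub hzero
  rw [hsub, Pi.sub_apply, condExp_of_stronglyMeasurable (ℱ.le s) (hadp s) (hint s)] at hzero
  exact sub_eq_zero.1 hzero

theorem martingale_iff_condExp_sub_ae_eq_zero (hadp : StronglyAdapted ℱ G)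
    (hint : ∀ t, Integrable (G t) μ) :
    Martingale G ℱ μ ↔ ∀ s t, s ≤ t → μ[G t - G s|ℱ s] =ᵐ[μ] 0 :=
  ⟨fun hG _ _ => hG.condExp_sub_ae_eq_zero, martingale_of_condExp_sub_ae_eq_zero hadp hint⟩

end Increments

end MeasureTheory

/-- Let `G_t = Σ_n γ_n 1_{T_n ≤ t}` be a pure-jump finite variation process
with deterministic jump times `T_n ↑ ∞` and `γ_n` an `F_{T_n}`-measurable
integrable random variable for each `n`.  Then `G` is a martingale with
respect to the filtration `(F_t)` if and only if `E[γ_n | F_{T_n-}] = 0`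
almost surely for every `n`, where
`F_{T_n-} = σ(F_0 ∪ {A ∩ {s < T_n} : A ∈ F_s, s < T_n}) = ⨆_{s < T_n} F_s`. -/
theorem pure_jump_martingale_iff
    {Ω : Type*} {m0 : MeasurableSpace Ω}
    (P : Measure Ω) [IsProbabilityMeasure P]
    (ℱ : Filtration ℝ≥0 m0)
    (T : ℕ → ℝ≥0) (hTpos : ∀ n, 0 < T n) (hTmono : StrictMono T)
    (hTlim : Filter.Tendsto T Filter.atTop Filter.atTop)
    (γ : ℕ → Ω → ℝ)
    (hγ_int : ∀ n, Integrable (γ n) P)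
    (hγ_meas : ∀ n, StronglyMeasurable[ℱ (T n)] (γ n))
    (G : ℝ≥0 → Ω → ℝ)
    (hG : ∀ t ω, G t ω = ∑' n, if T n ≤ t then γ n ω else 0) :
    Martingale G ℱ P ↔
      ∀ n, P[γ n|⨆ s ∈ Set.Iio (T n), ℱ s] =ᵐ[P] 0 := by
  obtain ⟨S, hS⟩ : ∃ S : ℝ≥0 → Finset ℕ, ∀ t n, n ∈ S t ↔ T n ≤ t :=
    ⟨fun t => (finite_setOf_le_of_tendsto_atTop hTlim t).toFinset,
      fun _ _ => Finite.mem_toFinset _⟩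
  have hGS : ∀ t, G t = ∑ n ∈ S t, γ n := fun t => funext fun ω => by
    rw [hG, tsum_ite_le_eq_sum (hS t), Finset.sum_apply]
  have hinc : ∀ s t, s ≤ t → G t - G s = ∑ n ∈ S t \ S s, γ n := fun s t hst => by
    have hsub : S s ⊆ S t := fun n hn => (hS t n).2 (((hS s n).1 hn).trans hst)
    rw [hGS, hGS, ← Finset.sum_sdiff hsub, add_sub_cancel_right]
  have hint : ∀ t, Integrable (G t) P := fun t =>
    hGS t ▸ integrable_finsetSum' _ fun n _ => hγ_int n
  have hadp : StronglyAdapted ℱ G := fun t => hGS t ▸ Finset.stronglyMeasurable_sum _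
    fun n hn => (hγ_meas n).mono (ℱ.mono ((hS t n).1 hn))
  rw [martingale_iff_condExp_sub_ae_eq_zero hadp hint]
  constructor
  · intro h n
    refine ℱ.condExp_biSup_Iio_ae_eq_zero ⟨0, hTpos n⟩ (hγ_int n) fun s hs => ?_
    obtain ⟨s', hss', hs'n, hk⟩ := exists_le_lt_forall_lt_le hTmono hs
    refine condExp_ae_eq_zero_of_le (ℱ.mono hss') (ℱ.le s') ?_
    simpa [hinc s' _ hs'n.le, sdiff_eq_singleton_of_forall_lt_le hTmono hS hs'n hk]
      using h s' (T n) hs'n.le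
  · intro h s t hst
    rw [hinc s t hst]
    refine condExp_finsetSum_ae_eq_zero (fun k _ => hγ_int k) fun k hk => ?_
    have hsk : s < T k := by simpa [hS] using (Finset.mem_sdiff.1 hk).2
    exact condExp_ae_eq_zero_of_le (le_biSup (fun u => (ℱ u : MeasurableSpace Ω)) hsk)
      (iSup₂_le fun u _ => ℱ.le u) (h k)
end
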